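/- arXiv:1903.11980 — 5 statements merged into one kernel-verified Lean document; each statement's English description precedes it below -/
import Mathlib

section
/- Let X₁, ..., Xₙ be real random variables, each with finite mean and variance. Then E[max_i X_i] ≤ max_i E[X_i] + sqrt( ((n−1)/n) · Σ_{i=1}^n Var(X_i) ). -/
/-!
Centre each variable, `Y i = X i - E[X i]`, and let `Ȳ` be the average of the `Y i`. Pointwise,
`X i ≤ max_j E[X j] + Ȳ + (Y i - Ȳ)`, and by Cauchy–Schwarz applied to the coefficient vector of
`Y i - Ȳ`, whose squared norm is `(n - 1) / n`, the last term is at most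
`√((n - 1) / n · Σ_j Y j²)`. Taking expectations, `E[Ȳ] = 0`, and Jensen's inequality for the
concave square root bounds `E[√((n - 1) / n · Σ_j Y j²)]` by `√((n - 1) / n · Σ_j Var(X j))`.
-/

open MeasureTheory ProbabilityTheory Finset

theorem sub_average_le_sqrt {ι : Type*} [Fintype ι] (y : ι → ℝ) (i : ι) :
    y i - (∑ j, y j) / Fintype.card ι ≤
      √((Fintype.card ι - 1) / Fintype.card ι * ∑ j, y j ^ 2) := by
  classical
  set n : ℝ := (Fintype.card ι : ℝ)
  have hn : n ≠ 0 := Nat.cast_ne_zero.mpr (Fintype.card_pos_iff.mpr ⟨i⟩).ne'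
  set w : ι → ℝ := fun j => (if j = i then 1 else 0) - 1 / n
  have hwy : ∑ j, w j * y j = y i - (∑ j, y j) / n := by
    simp [w, sub_mul, sum_sub_distrib, ← mul_sum, div_eq_inv_mul]
  have hw : ∑ j, w j ^ 2 = (n - 1) / n := by
    simp [w, sub_sq, sum_add_distrib, sum_sub_distrib]
    field_simp
    ring
  rw [← hwy, ← hw]
  exact (le_abs_self _).trans (Real.abs_le_sqrt (sum_mul_sq_le_sq_mul_sq _ _ _))

theorem ciSup_le_ciSup_add_average_add_sqrt {ι : Type*} [Fintype ι] [Nonempty ι]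
    (x m : ι → ℝ) :
    ⨆ i, x i ≤ (⨆ i, m i) + (∑ j, (x j - m j)) / Fintype.card ι +
      √((Fintype.card ι - 1) / Fintype.card ι * ∑ j, (x j - m j) ^ 2) :=
  ciSup_le fun i => by
    have := sub_average_le_sqrt (fun j => x j - m j) i
    have := le_ciSup (Set.finite_range m).bddAbove i
    linarith

section

variable {Ω : Type*} {mΩ : MeasurableSpace Ω} {P : Measure Ω}

theorem integrable_ciSup {ι : Type*} [Finite ι] {X : ι → Ω → ℝ}
    (hX : ∀ i, Integrable (X i) P) : Integrable (fun ω => ⨆ i, X i ω) P := by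
  have := Fintype.ofFinite ι
  refine Integrable.mono' (integrable_finsetSum univ fun i _ => (hX i).abs)
    (AEMeasurable.iSup fun i => (hX i).aemeasurable).aestronglyMeasurable
    (Filter.Eventually.of_forall fun ω => ?_)
  rcases isEmpty_or_nonempty ι with hι | hι
  · simp
  obtain ⟨i, hi⟩ := exists_eq_ciSup_of_finite (f := fun i => X i ω)
  rw [← hi, Real.norm_eq_abs]
  exact single_le_sum (f := fun i => |X i ω|) (fun i _ => abs_nonneg _) (mem_univ i)

theorem MeasureTheory.Integrable.sqrt [IsFiniteMeasure P] {f : Ω → ℝ} (hf : Integrable f P) :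
    Integrable (fun ω => √(f ω)) P := by
  refine (hf.abs.add (integrable_const 1)).mono' hf.aemeasurable.sqrt.aestronglyMeasurable
    (Filter.Eventually.of_forall fun ω => ?_)
  show ‖√(f ω)‖ ≤ |f ω| + 1
  rw [Real.norm_of_nonneg (Real.sqrt_nonneg _)]
  exact Real.sqrt_le_iff.mpr ⟨by positivity, by nlinarith [le_abs_self (f ω), sq_abs (f ω)]⟩

theorem integral_sqrt_le_sqrt_integral [IsProbabilityMeasure P] {f : Ω → ℝ}
    (hf_nonneg : 0 ≤ᵐ[P] f) (hf : Integrable f P) :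
    ∫ ω, √(f ω) ∂P ≤ √(∫ ω, f ω ∂P) :=
  Real.strictConcaveOn_sqrt.concaveOn.le_map_integral Real.continuous_sqrt.continuousOn
    isClosed_Ici hf_nonneg hf hf.sqrt

theorem integral_sqrt_mul_sum_sq_sub_integral_le [IsProbabilityMeasure P] {ι : Type*}
    [Fintype ι] {X : ι → Ω → ℝ} (hX : ∀ i, MemLp (X i) 2 P) {c : ℝ} (hc : 0 ≤ c) :
    ∫ ω, √(c * ∑ i, (X i ω - ∫ ω', X i ω' ∂P) ^ 2) ∂P ≤ √(c * ∑ i, variance (X i) P) := by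
  have hY : ∀ i, Integrable (fun ω => (X i ω - ∫ ω', X i ω' ∂P) ^ 2) P := fun i =>
    ((hX i).sub (memLp_const _)).integrable_sq
  have hS := (integrable_finsetSum univ fun i _ => hY i).const_mul c
  calc _ ≤ √(∫ ω, c * ∑ i, (X i ω - ∫ ω', X i ω' ∂P) ^ 2 ∂P) :=
        integral_sqrt_le_sqrt_integral (Filter.Eventually.of_forall fun ω => by positivity) hS
    _ = √(c * ∑ i, variance (X i) P) := by
        simp_rw [integral_const_mul, integral_finsetSum _ fun i _ => hY i,
          variance_eq_integral (hX _).aestronglyMeasurable.aemeasurable]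

theorem integral_ciSup_le_ciSup_integral_add_sqrt [IsProbabilityMeasure P] {ι : Type*}
    [Fintype ι] [Nonempty ι] {X : ι → Ω → ℝ} (hX : ∀ i, MemLp (X i) 2 P) :
    ∫ ω, (⨆ i, X i ω) ∂P ≤ (⨆ i, ∫ ω, X i ω ∂P) +
      √((Fintype.card ι - 1) / Fintype.card ι * ∑ i, variance (X i) P) := by
  set m : ι → ℝ := fun i => ∫ ω, X i ω ∂P
  set n : ℝ := (Fintype.card ι : ℝ)
  have hc : 0 ≤ (n - 1) / n :=
    div_nonneg (sub_nonneg.mpr (Nat.one_le_cast.mpr Fintype.card_pos)) (Nat.cast_nonneg _)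
  have hX₁ : ∀ i, Integrable (X i) P := fun i => (hX i).integrable one_le_two
  have hY : ∀ i, Integrable (fun ω => X i ω - m i) P := fun i => (hX₁ i).sub (integrable_const _)
  have hAvg : Integrable (fun ω => (∑ j, (X j ω - m j)) / n) P :=
    (integrable_finsetSum univ fun j _ => hY j).div_const _
  have hA : Integrable (fun ω => (⨆ i, m i) + (∑ j, (X j ω - m j)) / n) P :=
    (integrable_const _).add hAvg
  have hS : Integrable (fun ω => √((n - 1) / n * ∑ j, (X j ω - m j) ^ 2)) P :=
    ((integrable_finsetSum univ fun j _ =>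
      ((hX j).sub (memLp_const _)).integrable_sq).const_mul _).sqrt
  calc ∫ ω, (⨆ i, X i ω) ∂P
      ≤ ∫ ω, ((⨆ i, m i) + (∑ j, (X j ω - m j)) / n +
          √((n - 1) / n * ∑ j, (X j ω - m j) ^ 2)) ∂P :=
        integral_mono (integrable_ciSup hX₁) (hA.add hS) fun ω =>
          ciSup_le_ciSup_add_average_add_sqrt (fun i => X i ω) m
    _ = (⨆ i, m i) + ∫ ω, √((n - 1) / n * ∑ j, (X j ω - m j) ^ 2) ∂P := by
        rw [integral_add hA hS, integral_add (integrable_const _) hAvg, integral_const, integral_div,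
          integral_finsetSum _ fun j _ => hY j]
        simp [integral_sub (hX₁ _) (integrable_const _), m]
    _ ≤ (⨆ i, m i) + √((n - 1) / n * ∑ i, variance (X i) P) := by
        gcongr
        exact integral_sqrt_mul_sum_sq_sub_integral_le hX hc

end

theorem expectation_max_le_general {Ω : Type*} [MeasurableSpace Ω] (P : Measure Ω)
    [IsProbabilityMeasure P] (n : ℕ) (hn : 0 < n)
    (X : Fin n → Ω → ℝ)
    (hL2 : ∀ i, MemLp (X i) 2 P) :
    haveI : Nonempty (Fin n) := Fin.pos_iff_nonempty.mp hn
    ∫ ω, (⨆ i, X i ω) ∂P ≤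
      (⨆ i, ∫ ω, X i ω ∂P) +
        Real.sqrt ((((n : ℝ) - 1) / n) * ∑ i, variance (X i) P) := by
  have : Nonempty (Fin n) := Fin.pos_iff_nonempty.mp hn
  simpa using integral_ciSup_le_ciSup_integral_add_sqrt hL2

/-- Aven's bound: for real random variables `X₁, ..., Xₙ`, each with finite mean and
variance, `E[max_i X_i] ≤ max_i E[X_i] + sqrt(((n−1)/n) · Σ_i Var(X_i))`. -/
theorem expectation_max_le {Ω : Type*} [MeasurableSpace Ω] (P : Measure Ω)
    [IsProbabilityMeasure P] (n : ℕ) (hn : 0 < n)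
    (X : Fin n → Ω → ℝ) (hmeas : ∀ i, Measurable (X i))
    (hL2 : ∀ i, MemLp (X i) 2 P) :
    haveI : Nonempty (Fin n) := Fin.pos_iff_nonempty.mp hn
    ∫ ω, (⨆ i, X i ω) ∂P ≤
      (⨆ i, ∫ ω, X i ω ∂P) +
        Real.sqrt ((((n : ℝ) - 1) / n) * ∑ i, variance (X i) P) :=
  expectation_max_le_general P n hn X hL2
end

section
/- Let ALG be a random variable distributed as F_κ plus a sum of independent exponentials with rates κ, κ+1, ..., n−1, where F_κ ≤ 2 and 1 ≤ κ < n. Then for every real t, P(ALG ≥ t) ≤ binom(n−1, κ) · e^{−κ(t−2)}. -/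
/-!
Split off the slowest summand `X κ ∼ Exp(κ)` and let `T` be the sum of the others. Conditioning
on `T`, the tail of `X κ` gives `P(T + X κ ≥ s) ≤ e^{-κ s} E[e^{κ T}]`, and by independence
`E[e^{κ T}] = ∏_{i=κ+1}^{n-1} i / (i - κ) = binom(n-1, κ)`. Take `s = t - 2 ≤ t - F`.
-/

open MeasureTheory ProbabilityTheory Real Set

lemma setLIntegral_exp_mul_Ioi {a : ℝ} (ha : a < 0) (c : ℝ) :
    ∫⁻ x in Ioi c, ENNReal.ofReal (exp (a * x)) = ENNReal.ofReal (-exp (a * c) / a) := by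
  rw [← ofReal_integral_eq_lintegral_ofReal (integrableOn_exp_mul_Ioi ha c)
    (ae_of_all _ fun _ => (exp_pos _).le), integral_exp_mul_Ioi ha]

instance nullSingletonClass_expMeasure (r : ℝ) : NullSingletonClass (expMeasure r) := by
  unfold expMeasure gammaMeasure; infer_instance

lemma expMeasure_Ici_le {r : ℝ} (hr : 0 < r) (u : ℝ) :
    expMeasure r (Ici u) ≤ ENNReal.ofReal (exp (-(r * u))) := by
  have := isProbabilityMeasure_expMeasure hr
  rcases lt_or_ge u 0 with hu | hu
  · exact prob_le_one.trans (ENNReal.one_le_ofReal.mpr (one_le_exp (by nlinarith)))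
  · have hexp : exp (-(r * u)) ≤ 1 := exp_le_one_iff.mpr (by nlinarith)
    rw [← measure_congr Ioi_ae_eq_Ici, ← compl_Iic, prob_compl_eq_one_sub measurableSet_Iic,
      ← ofReal_cdf, cdf_expMeasure_eq hr, if_pos hu, ← ENNReal.ofReal_one,
      ← ENNReal.ofReal_sub _ (by linarith)]
    exact le_of_eq (congrArg _ (by ring))

lemma lintegral_exp_mul_expMeasure {r c : ℝ} (hr : 0 < r) (hcr : c < r) :
    ∫⁻ x, ENNReal.ofReal (exp (c * x)) ∂expMeasure r = ENNReal.ofReal (r / (r - c)) := by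
  have hdens : ∀ x, exponentialPDF r x * ENNReal.ofReal (exp (c * x))
      = (Ici 0).indicator (fun x => ENNReal.ofReal r * ENNReal.ofReal (exp ((c - r) * x))) x := by
    intro x
    rw [exponentialPDF_eq]
    split_ifs with hx
    · rw [indicator_of_mem (show x ∈ Ici 0 from hx), ENNReal.ofReal_mul hr.le, mul_assoc,
        ← ENNReal.ofReal_mul (exp_pos _).le, ← exp_add]
      ring_nf
    · simp [indicator_of_notMem (show x ∉ Ici 0 from hx)]
  have hpdf : expMeasure r = volume.withDensity (exponentialPDF r) := rfl
  have hm : Measurable (exponentialPDF r) := (measurable_exponentialPDFReal r).ennreal_ofReal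
  rw [hpdf, lintegral_withDensity_eq_lintegral_mul _ hm (by fun_prop)]
  simp only [Pi.mul_apply, hdens]
  rw [lintegral_indicator measurableSet_Ici, ← restrict_Ioi_eq_restrict_Ici,
    lintegral_const_mul _ (by fun_prop), setLIntegral_exp_mul_Ioi (by linarith),
    ← ENNReal.ofReal_mul hr.le]
  congr 1
  rw [mul_zero, exp_zero, neg_div, ← div_neg, neg_sub, mul_one_div]

lemma prod_Ico_div_sub_eq_choose {k n : ℕ} (hkn : k < n) :
    ∏ i ∈ Finset.Ico (k + 1) n, ((i : ℝ) / (i - k)) = (n - 1).choose k := by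
  induction n, hkn using Nat.le_induction with
  | base => simp
  | succ m hkm ih =>
    have hpos : (0 : ℝ) < m - k := by
      rw [sub_pos]; exact_mod_cast hkm
    have hpascal : (m.choose k : ℝ) * (m - k) = (m - 1).choose k * m := by
      have h := Nat.choose_mul_succ_eq (m - 1) k
      rw [Nat.sub_add_cancel (by omega)] at h
      rw [← Nat.cast_sub (Nat.le_of_succ_le hkm)]
      exact_mod_cast h.symm
    rw [Finset.prod_Ico_succ_top hkm, ih, Nat.add_sub_cancel]
    field_simp
    linarith

namespace ProbabilityTheory

variable {Ω : Type*} [MeasurableSpace Ω] {P : Measure Ω}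

lemma iIndepFun.lintegral_exp_mul_sum {ι : Type*} {X : ι → Ω → ℝ} (hX : ∀ i, Measurable (X i))
    (hindep : iIndepFun X P) (c : ℝ) (s : Finset ι) :
    ∫⁻ ω, ENNReal.ofReal (exp (c * ∑ i ∈ s, X i ω)) ∂P
      = ∏ i ∈ s, ∫⁻ ω, ENNReal.ofReal (exp (c * X i ω)) ∂P := by
  simp_rw [Finset.mul_sum, exp_sum, ENNReal.ofReal_prod_of_nonneg fun _ _ => (exp_pos _).le]
  exact lintegral_prod_eq_prod_lintegral_of_indepFun s _
    (hindep.comp (fun _ x => ENNReal.ofReal (exp (c * x))) fun _ => by fun_prop)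
    fun i => by fun_prop

/-- A Chernoff bound that needs no exponential moment of `Z` at `c` (an `Exp(c)` variable has
none): condition on `Y` and use the tail of `Z` directly. -/
lemma IndepFun.measure_add_ge_le_exp_mul_lintegral [IsFiniteMeasure P] {Y Z : Ω → ℝ} (hY : Measurable Y)
    (hZ : Measurable Z) (hYZ : IndepFun Y Z P) {c : ℝ}
    (hZtail : ∀ u, P.map Z (Ici u) ≤ ENNReal.ofReal (exp (-(c * u)))) (s : ℝ) :
    P {ω | s ≤ Y ω + Z ω}
      ≤ ENNReal.ofReal (exp (-(c * s))) * ∫⁻ ω, ENNReal.ofReal (exp (c * Y ω)) ∂P := by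
  set A : Set (ℝ × ℝ) := {p | s ≤ p.1 + p.2}
  have hA : MeasurableSet A := measurableSet_le measurable_const (by fun_prop)
  have hsection : ∀ y, Prod.mk y ⁻¹' A = Ici (s - y) := fun y =>
    Set.ext fun z => show s ≤ y + z ↔ s - y ≤ z from sub_le_iff_le_add'.symm
  calc P {ω | s ≤ Y ω + Z ω} = (P.map Y).prod (P.map Z) A := by
        rw [← (indepFun_iff_map_prod_eq_prod_map_map hY.aemeasurable hZ.aemeasurable).mp hYZ,
          Measure.map_apply (hY.prodMk hZ) hA]
        rfl
    _ = ∫⁻ y, P.map Z (Ici (s - y)) ∂P.map Y := by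
        simp_rw [Measure.prod_apply hA, hsection]
    _ ≤ ∫⁻ y, ENNReal.ofReal (exp (-(c * s))) * ENNReal.ofReal (exp (c * y)) ∂P.map Y := by
        refine lintegral_mono fun y => (hZtail _).trans_eq ?_
        rw [← ENNReal.ofReal_mul (exp_pos _).le, ← exp_add]
        ring_nf
    _ = ENNReal.ofReal (exp (-(c * s))) * ∫⁻ ω, ENNReal.ofReal (exp (c * Y ω)) ∂P := by
        rw [lintegral_const_mul _ (by fun_prop), lintegral_map (by fun_prop) hY]

lemma lintegral_exp_mul_sum_erase_eq_choose {n κ : ℕ} (hκn : κ < n) {X : ℕ → Ω → ℝ}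
    (hmeas : ∀ i, Measurable (X i)) (hindep : iIndepFun (fun i : Finset.Ico κ n => X i) P)
    (hlaw : ∀ i ∈ Finset.Ico κ n, P.map (X i) = expMeasure i) :
    ∫⁻ ω, ENNReal.ofReal
        (exp (κ * ∑ j ∈ Finset.univ.erase (⟨κ, Finset.left_mem_Ico.mpr hκn⟩ : Finset.Ico κ n),
          X j ω)) ∂P
      = ENNReal.ofReal ((n - 1).choose κ) := by
  have hfactor : ∀ i ∈ Finset.Ico (κ + 1) n,
      ∫⁻ ω, ENNReal.ofReal (exp (κ * X i ω)) ∂P = ENNReal.ofReal (i / (i - κ)) := by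
    intro i hi
    obtain ⟨hκi, hin⟩ := Finset.mem_Ico.mp hi
    rw [← lintegral_map (f := fun x => ENNReal.ofReal (exp (κ * x))) (by fun_prop) (hmeas i),
      hlaw i (Finset.mem_Ico.mpr ⟨by omega, hin⟩),
      lintegral_exp_mul_expMeasure (by exact_mod_cast (by omega : 0 < i)) (by exact_mod_cast hκi)]
  have hnonneg : ∀ i ∈ Finset.Ico (κ + 1) n, (0 : ℝ) ≤ i / (i - κ) := fun i hi => by
    have hκi : (κ : ℝ) ≤ i := by exact_mod_cast (Finset.mem_Ico.mp hi).1.trans' κ.le_succ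
    exact div_nonneg i.cast_nonneg (sub_nonneg.mpr hκi)
  rw [iIndepFun.lintegral_exp_mul_sum (X := fun j : Finset.Ico κ n => X j) (fun j => hmeas j)
      hindep, Finset.univ_eq_attach,
    Finset.prod_erase_attach (fun i => ∫⁻ ω, ENNReal.ofReal (exp (κ * X i ω)) ∂P),
    ← Nat.Ico_succ_left_eq_erase_Ico, Finset.prod_congr rfl hfactor,
    ← ENNReal.ofReal_prod_of_nonneg hnonneg, prod_Ico_div_sub_eq_choose hκn]

end ProbabilityTheory

/-- Tail bound for `ALG = F_κ + Σ_{i=κ}^{n−1} Exp(i)` with `F_κ ≤ 2` and `1 ≤ κ < n`: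
for every real `t`, `P(ALG ≥ t) ≤ binom(n−1, κ) · e^{−κ(t−2)}`. -/
theorem alg_tail_bound {Ω : Type*} [MeasurableSpace Ω] (P : Measure Ω)
    [IsProbabilityMeasure P] (n κ : ℕ) (hκ : 1 ≤ κ) (hκn : κ < n)
    (F : ℝ) (hF : F ≤ 2)
    (X : ℕ → Ω → ℝ) (hmeas : ∀ i, Measurable (X i))
    (hindep : iIndepFun
      (fun i : {i : ℕ // i ∈ Finset.Ico κ n} => X i) P)
    (hlaw : ∀ i ∈ Finset.Ico κ n, P.map (X i) = expMeasure i) :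
    ∀ t : ℝ, (P {ω | F + ∑ i ∈ Finset.Ico κ n, X i ω ≥ t}).toReal ≤
      ((n - 1).choose κ : ℝ) * Real.exp (-(κ : ℝ) * (t - 2)) := by
  intro t
  have hκmem : κ ∈ Finset.Ico κ n := Finset.left_mem_Ico.mpr hκn
  set T : Ω → ℝ := fun ω => ∑ j ∈ Finset.univ.erase (⟨κ, hκmem⟩ : Finset.Ico κ n), X j ω
  have hsplit : ∀ ω, ∑ i ∈ Finset.Ico κ n, X i ω = T ω + X κ ω := fun ω => by
    rw [← Finset.sum_coe_sort, ← Finset.sum_erase_add _ _ (Finset.mem_univ ⟨κ, hκmem⟩)]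
  have hindepT : IndepFun T (X κ) P := by
    simpa only [Finset.sum_fn] using
      hindep.indepFun_finsetSum_of_notMem (fun j => hmeas j) (Finset.notMem_erase _ _)
  have htail : ∀ u, P.map (X κ) (Ici u) ≤ ENNReal.ofReal (exp (-(κ * u))) := fun u => by
    rw [hlaw κ hκmem]
    exact expMeasure_Ici_le (by exact_mod_cast hκ) u
  have hevent : {ω | F + ∑ i ∈ Finset.Ico κ n, X i ω ≥ t} ⊆ {ω | t - 2 ≤ T ω + X κ ω} :=
    fun ω hω => by simp only [mem_ofPred_eq, hsplit] at hω ⊢; linarith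
  have hbound := (measure_mono hevent).trans
    (hindepT.measure_add_ge_le_exp_mul_lintegral (by fun_prop) (hmeas κ) htail (t - 2))
  rw [lintegral_exp_mul_sum_erase_eq_choose hκn hmeas hindep hlaw,
    ← ENNReal.ofReal_mul (exp_pos _).le, neg_mul_eq_neg_mul, mul_comm] at hbound
  exact ENNReal.toReal_le_of_le_ofReal (by positivity) hbound
end

section
/- For every α > 0, (α² + 3α)/(α² + 4α + 2) ≤ α·e^α·∫_α^∞ (e^{−t}/t) dt ≤ (α² + 5α + 2)/(α² + 6α + 6). -/
/-!
For `F(t) = e^{-t} r(t)` one has `-F' = e^{-t} (r - r')` and `∫_α^∞ -F' = F(α)`, so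
`E₁(α) ≥ e^{-α} r(α)` as soon as `0 ≤ r - r' ≤ 1/t` on `(α, ∞)`, and `E₁(α) ≤ e^{-α} r(α)` as soon
as `r - r' ≥ 1/t` there. The Padé approximants `r(t) = (t + 3)/(t² + 4t + 2)` and
`r(t) = (t² + 5t + 2)/(t (t² + 6t + 6))` qualify: for them `r - r' - 1/t` equals
`-4/(t (t² + 4t + 2)²)` and `12/(t² (t² + 6t + 6)²)` respectively.
-/

open MeasureTheory Set Filter Topology Real

section TailComparison

variable {f F F' : ℝ → ℝ} {a : ℝ}

theorem setIntegral_Ioi_neg_deriv (hF : ∀ x ∈ Ici a, HasDerivAt F (F' x) x)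
    (hF0 : Tendsto F atTop (𝓝 0)) (hF'0 : ∀ x ∈ Ioi a, F' x ≤ 0) :
    ∫ x in Ioi a, -F' x = F a := by
  rw [integral_neg, integral_Ioi_of_hasDerivAt_of_nonpos' hF hF'0 hF0, zero_sub, neg_neg]

theorem setIntegral_Ioi_le_of_le_neg_deriv (hF : ∀ x ∈ Ici a, HasDerivAt F (F' x) x)
    (hF0 : Tendsto F atTop (𝓝 0)) (hF'0 : ∀ x ∈ Ioi a, F' x ≤ 0) (hf : IntegrableOn f (Ioi a))
    (hfF : ∀ x ∈ Ioi a, f x ≤ -F' x) : ∫ x in Ioi a, f x ≤ F a :=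
  setIntegral_Ioi_neg_deriv hF hF0 hF'0 ▸ setIntegral_mono_on hf
    (integrableOn_Ioi_deriv_of_nonpos' hF hF'0 hF0).neg measurableSet_Ioi hfF

theorem le_setIntegral_Ioi_of_neg_deriv_le (hF : ∀ x ∈ Ici a, HasDerivAt F (F' x) x)
    (hF0 : Tendsto F atTop (𝓝 0)) (hF'0 : ∀ x ∈ Ioi a, F' x ≤ 0) (hf : IntegrableOn f (Ioi a))
    (hfF : ∀ x ∈ Ioi a, -F' x ≤ f x) : F a ≤ ∫ x in Ioi a, f x :=
  setIntegral_Ioi_neg_deriv hF hF0 hF'0 ▸ setIntegral_mono_on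
    (integrableOn_Ioi_deriv_of_nonpos' hF hF'0 hF0).neg hf measurableSet_Ioi hfF

end TailComparison

theorem integrableOn_exp_neg_div_self_Ioi {a : ℝ} (ha : 0 < a) :
    IntegrableOn (fun t => exp (-t) / t) (Ioi a) := by
  refine ((integrableOn_exp_neg_Ioi a).div_const a).mono' ?_ ?_
  · exact ContinuousOn.aestronglyMeasurable (by fun_prop (disch := grind)) measurableSet_Ioi
  · refine (ae_restrict_iff' measurableSet_Ioi).2 (Eventually.of_forall fun t ht => ?_)
    have ht0 : 0 < t := ha.trans ht
    rw [norm_of_nonneg (by positivity)]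
    exact div_le_div_of_nonneg_left (exp_pos _).le ha ht.le

section ExpNegMul

variable {r r' : ℝ → ℝ} {a : ℝ}

theorem hasDerivAt_exp_neg_mul {x : ℝ} (hr : HasDerivAt r (r' x) x) :
    HasDerivAt (fun t => exp (-t) * r t) (-(exp (-x) * (r x - r' x))) x := by
  refine ((hasDerivAt_neg x).exp.mul hr).congr_deriv ?_
  ring

theorem tendsto_exp_neg_mul_atTop (hr : IsBoundedUnder (· ≤ ·) atTop fun t => |r t|) :
    Tendsto (fun t => exp (-t) * r t) atTop (𝓝 0) :=
  tendsto_exp_neg_atTop_nhds_zero.zero_mul_isBoundedUnder_le hr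

theorem setIntegral_Ioi_exp_neg_div_self_le (ha : 0 < a)
    (hr : ∀ x ∈ Ici a, HasDerivAt r (r' x) x) (hr_bdd : IsBoundedUnder (· ≤ ·) atTop fun t => |r t|)
    (hrr' : ∀ x ∈ Ioi a, 1 / x ≤ r x - r' x) :
    ∫ t in Ioi a, exp (-t) / t ≤ exp (-a) * r a := by
  refine setIntegral_Ioi_le_of_le_neg_deriv (fun x hx => hasDerivAt_exp_neg_mul (hr x hx))
    (tendsto_exp_neg_mul_atTop hr_bdd) (fun x hx => ?_) (integrableOn_exp_neg_div_self_Ioi ha)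
    (fun x hx => ?_)
  · have : 0 < 1 / x := one_div_pos.2 (ha.trans hx)
    exact neg_nonpos.2 (mul_nonneg (exp_pos _).le (by linarith [hrr' x hx]))
  · rw [neg_neg, div_eq_mul_one_div]
    exact mul_le_mul_of_nonneg_left (hrr' x hx) (exp_pos _).le

theorem exp_neg_mul_le_setIntegral_Ioi_exp_neg_div_self (ha : 0 < a)
    (hr : ∀ x ∈ Ici a, HasDerivAt r (r' x) x) (hr_bdd : IsBoundedUnder (· ≤ ·) atTop fun t => |r t|)
    (hrr'0 : ∀ x ∈ Ioi a, 0 ≤ r x - r' x) (hrr' : ∀ x ∈ Ioi a, r x - r' x ≤ 1 / x) :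
    exp (-a) * r a ≤ ∫ t in Ioi a, exp (-t) / t := by
  refine le_setIntegral_Ioi_of_neg_deriv_le (fun x hx => hasDerivAt_exp_neg_mul (hr x hx))
    (tendsto_exp_neg_mul_atTop hr_bdd) (fun x hx => ?_) (integrableOn_exp_neg_div_self_Ioi ha)
    (fun x hx => ?_)
  · exact neg_nonpos.2 (mul_nonneg (exp_pos _).le (hrr'0 x hx))
  · rw [neg_neg, div_eq_mul_one_div]
    exact mul_le_mul_of_nonneg_left (hrr' x hx) (exp_pos _).le

end ExpNegMul

noncomputable def e1PadeLower (t : ℝ) : ℝ := (t + 3) / (t ^ 2 + 4 * t + 2)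

noncomputable def e1PadeUpper (t : ℝ) : ℝ := (t ^ 2 + 5 * t + 2) / (t * (t ^ 2 + 6 * t + 6))

theorem hasDerivAt_e1PadeLower {x : ℝ} (hx : 0 < x) :
    HasDerivAt e1PadeLower (e1PadeLower x - 1 / x + 4 / (x * (x ^ 2 + 4 * x + 2) ^ 2)) x := by
  have hq : x ^ 2 + 4 * x + 2 ≠ 0 := by positivity
  have := (((hasDerivAt_id x).add_const 3).div
    (((hasDerivAt_pow 2 x).add ((hasDerivAt_id x).const_mul 4)).add_const 2) hq)
  refine this.congr_deriv ?_
  simp only [e1PadeLower, id, Pi.add_apply]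
  field_simp
  ring

theorem hasDerivAt_e1PadeUpper {x : ℝ} (hx : 0 < x) :
    HasDerivAt e1PadeUpper
      (e1PadeUpper x - 1 / x - 12 / (x ^ 2 * (x ^ 2 + 6 * x + 6) ^ 2)) x := by
  have hq : x * (x ^ 2 + 6 * x + 6) ≠ 0 := by positivity
  have := (((hasDerivAt_pow 2 x).add ((hasDerivAt_id x).const_mul 5)).add_const 2).div
    ((hasDerivAt_id x).mul
      (((hasDerivAt_pow 2 x).add ((hasDerivAt_id x).const_mul 6)).add_const 6)) hq
  refine this.congr_deriv ?_
  simp only [e1PadeUpper, id, Pi.add_apply, Pi.mul_apply]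
  field_simp
  ring

theorem isBoundedUnder_abs_e1PadeLower :
    IsBoundedUnder (· ≤ ·) atTop fun t => |e1PadeLower t| := by
  refine isBoundedUnder_of_eventually_le (a := 1) ?_
  filter_upwards [eventually_ge_atTop 1] with t ht
  rw [e1PadeLower, abs_of_nonneg (by positivity), div_le_one (by positivity)]
  nlinarith

theorem isBoundedUnder_abs_e1PadeUpper :
    IsBoundedUnder (· ≤ ·) atTop fun t => |e1PadeUpper t| := by
  refine isBoundedUnder_of_eventually_le (a := 1) ?_
  filter_upwards [eventually_ge_atTop 1] with t ht
  rw [e1PadeUpper, abs_of_nonneg (by positivity), div_le_one (by positivity)]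
  nlinarith

theorem exp_neg_mul_e1PadeLower_le_setIntegral_Ioi {a : ℝ} (ha : 0 < a) :
    exp (-a) * e1PadeLower a ≤ ∫ t in Ioi a, exp (-t) / t := by
  refine exp_neg_mul_le_setIntegral_Ioi_exp_neg_div_self ha
    (fun x hx => hasDerivAt_e1PadeLower (ha.trans_le hx)) isBoundedUnder_abs_e1PadeLower
    (fun x hx => ?_) (fun x hx => ?_)
  all_goals have hx0 : 0 < x := ha.trans hx
  · have hq : 4 ≤ (x ^ 2 + 4 * x + 2) ^ 2 := by nlinarith
    have : 4 / (x * (x ^ 2 + 4 * x + 2) ^ 2) ≤ 1 / x := by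
      rw [div_le_div_iff₀ (by positivity) hx0]
      nlinarith
    linarith
  · have : 0 ≤ 4 / (x * (x ^ 2 + 4 * x + 2) ^ 2) := by positivity
    linarith

theorem setIntegral_Ioi_le_exp_neg_mul_e1PadeUpper {a : ℝ} (ha : 0 < a) :
    ∫ t in Ioi a, exp (-t) / t ≤ exp (-a) * e1PadeUpper a := by
  refine setIntegral_Ioi_exp_neg_div_self_le ha
    (fun x hx => hasDerivAt_e1PadeUpper (ha.trans_le hx)) isBoundedUnder_abs_e1PadeUpper
    (fun x _ => ?_)
  have : 0 ≤ 12 / (x ^ 2 * (x ^ 2 + 6 * x + 6) ^ 2) := by positivity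
  linarith

/-- Second-order Padé approximant bounds for `α·e^α·E₁(α)`: for every `α > 0`,
`(α² + 3α)/(α² + 4α + 2) ≤ α·e^α·∫_α^∞ e^{−t}/t dt ≤ (α² + 5α + 2)/(α² + 6α + 6)`. -/
theorem pade_two_expIntegral (α : ℝ) (hα : 0 < α) :
    (α ^ 2 + 3 * α) / (α ^ 2 + 4 * α + 2) ≤
      α * Real.exp α * ∫ t in Set.Ici α, Real.exp (-t) / t ∧
    α * Real.exp α * (∫ t in Set.Ici α, Real.exp (-t) / t) ≤
      (α ^ 2 + 5 * α + 2) / (α ^ 2 + 6 * α + 6) := by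
  have hscale (c : ℝ) : α * exp α * (exp (-α) * c) = α * c := by
    rw [exp_neg]
    field_simp
  have hαexp : 0 ≤ α * exp α := by positivity
  rw [integral_Ici_eq_integral_Ioi]
  constructor
  · calc (α ^ 2 + 3 * α) / (α ^ 2 + 4 * α + 2) = α * exp α * (exp (-α) * e1PadeLower α) := by
          rw [hscale, e1PadeLower]
          ring
      _ ≤ _ := mul_le_mul_of_nonneg_left (exp_neg_mul_e1PadeLower_le_setIntegral_Ioi hα) hαexp
  · calc _ ≤ α * exp α * (exp (-α) * e1PadeUpper α) :=
          mul_le_mul_of_nonneg_left (setIntegral_Ioi_le_exp_neg_mul_e1PadeUpper hα) hαexp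
      _ = (α ^ 2 + 5 * α + 2) / (α ^ 2 + 6 * α + 6) := by
          rw [hscale, e1PadeUpper]
          field_simp
end

section
/- For every α > 0, α/(α+1) ≤ α·e^α·∫_α^∞ (e^{−t}/t) dt ≤ (α+1)/(α+2). -/
/-!
On `(α, ∞)` the integrand `e^{-t}/t` is squeezed between the derivatives of the Padé-type
antiderivatives `-e^{-t}/(t+1)` and `-e^{-t}(t+1)/(t(t+2))`, both of which vanish at infinity;
pointwise the comparisons reduce to `t(t+2) ≤ (t+1)²` and `t²(t+2)² ≤ t(t³+4t²+4t+2)`.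
Integrating gives `e^{-α}/(α+1) ≤ E₁(α) ≤ e^{-α}(α+1)/(α(α+2))`.
-/

open MeasureTheory Real Set Filter Topology

section ComparisonWithDerivative

variable {f g G : ℝ → ℝ} {a m : ℝ}

theorem integrableOn_Ioi_of_le_hasDerivAt (hG : ∀ x ∈ Ici a, HasDerivAt G (g x) x)
    (hGm : Tendsto G atTop (𝓝 m)) (hf : AEStronglyMeasurable f (volume.restrict (Ioi a)))
    (hf0 : ∀ x ∈ Ioi a, 0 ≤ f x) (hfg : ∀ x ∈ Ioi a, f x ≤ g x) :
    IntegrableOn f (Ioi a) := by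
  have hg0 : ∀ x ∈ Ioi a, 0 ≤ g x := fun x hx => (hf0 x hx).trans (hfg x hx)
  refine (integrableOn_Ioi_deriv_of_nonneg' hG hg0 hGm).mono' hf ?_
  filter_upwards [ae_restrict_mem measurableSet_Ioi] with x hx
  rw [Real.norm_of_nonneg (hf0 x hx)]
  exact hfg x hx

theorem setIntegral_Ioi_le_of_le_hasDerivAt (hG : ∀ x ∈ Ici a, HasDerivAt G (g x) x)
    (hGm : Tendsto G atTop (𝓝 m)) (hf : IntegrableOn f (Ioi a))
    (hf0 : ∀ x ∈ Ioi a, 0 ≤ f x) (hfg : ∀ x ∈ Ioi a, f x ≤ g x) :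
    ∫ x in Ioi a, f x ≤ m - G a := by
  have hg0 : ∀ x ∈ Ioi a, 0 ≤ g x := fun x hx => (hf0 x hx).trans (hfg x hx)
  rw [← integral_Ioi_of_hasDerivAt_of_nonneg' hG hg0 hGm]
  exact setIntegral_mono_on hf (integrableOn_Ioi_deriv_of_nonneg' hG hg0 hGm) measurableSet_Ioi hfg

theorem le_setIntegral_Ioi_of_hasDerivAt_le (hG : ∀ x ∈ Ici a, HasDerivAt G (g x) x)
    (hGm : Tendsto G atTop (𝓝 m)) (hf : IntegrableOn f (Ioi a))
    (hg0 : ∀ x ∈ Ioi a, 0 ≤ g x) (hgf : ∀ x ∈ Ioi a, g x ≤ f x) :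
    m - G a ≤ ∫ x in Ioi a, f x := by
  rw [← integral_Ioi_of_hasDerivAt_of_nonneg' hG hg0 hGm]
  exact setIntegral_mono_on (integrableOn_Ioi_deriv_of_nonneg' hG hg0 hGm) hf measurableSet_Ioi hgf

end ComparisonWithDerivative

theorem hasDerivAt_neg_exp_neg_div_add_one {t : ℝ} (ht : t + 1 ≠ 0) :
    HasDerivAt (fun t => -(exp (-t) / (t + 1))) (exp (-t) * (t + 2) / (t + 1) ^ 2) t := by
  refine ((hasDerivAt_neg t).exp.div ((hasDerivAt_id t).add_const 1) ht).neg.congr_deriv ?_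
  simp only [id]
  ring

theorem hasDerivAt_neg_exp_neg_mul_add_one_div {t : ℝ} (ht : t ≠ 0) (ht2 : t + 2 ≠ 0) :
    HasDerivAt (fun t => -(exp (-t) * (t + 1) / (t * (t + 2))))
      (exp (-t) * (t ^ 3 + 4 * t ^ 2 + 4 * t + 2) / (t * (t + 2)) ^ 2) t := by
  have hnum := (hasDerivAt_neg t).exp.mul ((hasDerivAt_id t).add_const 1)
  have hden := (hasDerivAt_id t).mul ((hasDerivAt_id t).add_const 2)
  refine (hnum.div hden (mul_ne_zero ht ht2)).neg.congr_deriv ?_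
  simp only [id, Pi.mul_apply]
  ring

theorem tendsto_exp_neg_div_add_one :
    Tendsto (fun t => exp (-t) / (t + 1)) atTop (𝓝 0) :=
  tendsto_exp_neg_atTop_nhds_zero.div_atTop (tendsto_atTop_add_const_right _ 1 tendsto_id)

theorem tendsto_exp_neg_mul_add_one_div :
    Tendsto (fun t => exp (-t) * (t + 1) / (t * (t + 2))) atTop (𝓝 0) := by
  have hnum : Tendsto (fun t => exp (-t) * (t + 1)) atTop (𝓝 0) := by
    have h := (tendsto_pow_mul_exp_neg_atTop_nhds_zero 1).add tendsto_exp_neg_atTop_nhds_zero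
    rw [add_zero] at h
    exact h.congr fun t => by ring
  exact hnum.div_atTop
    (tendsto_id.atTop_mul_atTop₀ (tendsto_atTop_add_const_right _ 2 tendsto_id))

section ExpIntegral

variable {a : ℝ}

theorem exp_neg_mul_div_add_one_sq_le_exp_neg_div {t : ℝ} (ht : 0 < t) :
    exp (-t) * (t + 2) / (t + 1) ^ 2 ≤ exp (-t) / t := by
  rw [div_le_div_iff₀ (by positivity) ht]
  nlinarith [exp_pos (-t)]

theorem exp_neg_div_le_exp_neg_mul_div_mul_add_two_sq {t : ℝ} (ht : 0 < t) :
    exp (-t) / t ≤ exp (-t) * (t ^ 3 + 4 * t ^ 2 + 4 * t + 2) / (t * (t + 2)) ^ 2 := by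
  rw [div_le_div_iff₀ ht (by positivity)]
  nlinarith [exp_pos (-t)]

theorem integrableOn_exp_neg_div_Ioi (ha : 0 < a) :
    IntegrableOn (fun t => exp (-t) / t) (Ioi a) :=
  integrableOn_Ioi_of_le_hasDerivAt
    (fun t ht => hasDerivAt_neg_exp_neg_mul_add_one_div (by linarith [mem_Ici.1 ht])
      (by linarith [mem_Ici.1 ht]))
    tendsto_exp_neg_mul_add_one_div.neg
    (by fun_prop : Measurable fun t : ℝ => exp (-t) / t).aestronglyMeasurable
    (fun t ht => by have := ha.trans ht; positivity)
    (fun t ht => exp_neg_div_le_exp_neg_mul_div_mul_add_two_sq (ha.trans ht))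

theorem exp_neg_div_add_one_le_integral_exp_neg_div (ha : 0 < a) :
    exp (-a) / (a + 1) ≤ ∫ t in Ioi a, exp (-t) / t := by
  simpa using le_setIntegral_Ioi_of_hasDerivAt_le
    (fun t ht => hasDerivAt_neg_exp_neg_div_add_one (by linarith [mem_Ici.1 ht]))
    tendsto_exp_neg_div_add_one.neg (integrableOn_exp_neg_div_Ioi ha)
    (fun t ht => by have := ha.trans ht; positivity)
    (fun t ht => exp_neg_mul_div_add_one_sq_le_exp_neg_div (ha.trans ht))

theorem integral_exp_neg_div_le_exp_neg_mul_add_one_div (ha : 0 < a) :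
    ∫ t in Ioi a, exp (-t) / t ≤ exp (-a) * (a + 1) / (a * (a + 2)) := by
  simpa using setIntegral_Ioi_le_of_le_hasDerivAt
    (fun t ht => hasDerivAt_neg_exp_neg_mul_add_one_div (by linarith [mem_Ici.1 ht])
      (by linarith [mem_Ici.1 ht]))
    tendsto_exp_neg_mul_add_one_div.neg (integrableOn_exp_neg_div_Ioi ha)
    (fun t ht => by have := ha.trans ht; positivity)
    (fun t ht => exp_neg_div_le_exp_neg_mul_div_mul_add_two_sq (ha.trans ht))

end ExpIntegral

/-- First-order Padé approximant bounds for `α·e^α·E₁(α)`: for every `α > 0`,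
`α/(α+1) ≤ α·e^α·∫_α^∞ e^{−t}/t dt ≤ (α+1)/(α+2)`. -/
theorem pade_one_expIntegral (α : ℝ) (hα : 0 < α) :
    α / (α + 1) ≤ α * Real.exp α * ∫ t in Set.Ici α, Real.exp (-t) / t ∧
    α * Real.exp α * (∫ t in Set.Ici α, Real.exp (-t) / t) ≤ (α + 1) / (α + 2) := by
  rw [integral_Ici_eq_integral_Ioi]
  have hscale : 0 ≤ α * exp α := by positivity
  constructor
  · calc α / (α + 1) = α * exp α * (exp (-α) / (α + 1)) := by
          rw [exp_neg]; field_simp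
      _ ≤ α * exp α * ∫ t in Ioi α, exp (-t) / t :=
          mul_le_mul_of_nonneg_left (exp_neg_div_add_one_le_integral_exp_neg_div hα) hscale
  · calc α * exp α * ∫ t in Ioi α, exp (-t) / t
        ≤ α * exp α * (exp (-α) * (α + 1) / (α * (α + 2))) :=
          mul_le_mul_of_nonneg_left (integral_exp_neg_div_le_exp_neg_mul_add_one_div hα) hscale
      _ = (α + 1) / (α + 2) := by
          rw [exp_neg]; field_simp
end

section
/- Let Z ~ Exp(λ) with λ > 0, and let F > 0. Then E[1/(F + Z)²] = λ·(1/F − λ·e^{λF}·∫_{λF}^∞ (e^{−t}/t) dt), and consequently E[1/(F + Z)²] ≤ (λ²F + 2λ)/(λ²F³ + 4λF² + 2F). -/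
/-!
Writing `Z ~ Exp(l)` as a density and substituting `t = l (F + x)` gives
`E[1/(F+Z)²] = l² e^{lF} ∫_{lF}^∞ e^{-t}/t² dt`, and one integration by parts turns this into
`e^{-a}/a - E₁(a)` with `a = lF`. For the bound, `e^{-t}(t+3)/(t²+4t+2)` (the second Padé
approximant of `E₁`) has derivative `-e^{-t}(t³+8t²+20t+16)/(t²+4t+2)²`, which dominates
`-e^{-t}/t` on `t > 0`; integrating from `a` to `∞` gives `E₁(a) ≥ e^{-a}(a+3)/(a²+4a+2)`.
-/

open MeasureTheory ProbabilityTheory Real Set Filter Topology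

section
variable {E : Type*} [NormedAddCommGroup E] [NormedSpace ℝ E]

theorem integral_expMeasure {r : ℝ} (hr : 0 ≤ r) (f : ℝ → E) :
    ∫ x, f x ∂expMeasure r = ∫ x in Ioi 0, (r * exp (-(r * x))) • f x := by
  have hpdf : ∀ x, (gammaPDF 1 r x).toReal • f x =
      (Ici 0).indicator (fun x => (r * exp (-(r * x))) • f x) x := by
    intro x
    by_cases hx : 0 ≤ x
    · simp [gammaPDF, gammaPDFReal, hx, indicator_of_mem, hr, ENNReal.toReal_ofReal,
        (exp_pos _).le]
    · simp [gammaPDF, gammaPDFReal, hx]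
  have hmeas : Measurable (gammaPDF 1 r) := (measurable_gammaPDFReal 1 r).ennreal_ofReal
  rw [expMeasure, gammaMeasure, integral_withDensity_eq_integral_toReal_smul hmeas
    (ae_of_all _ fun _ => ENNReal.ofReal_lt_top)]
  simp_rw [hpdf]
  rw [integral_indicator measurableSet_Ici, integral_Ici_eq_integral_Ioi]

theorem integral_Ioi_comp_mul_add (g : ℝ → E) {b : ℝ} (hb : 0 < b) (a c : ℝ) :
    ∫ x in Ioi a, g (b * (x + c)) = b⁻¹ • ∫ t in Ioi (b * (a + c)), g t := by
  have htrans := (measurePreserving_add_right volume c).setIntegral_preimage_emb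
    (measurableEmbedding_addRight c) (fun y => g (b * y)) (Ioi (a + c))
  rw [preimage_add_const_Ioi, add_sub_cancel_right] at htrans
  rw [htrans, integral_comp_mul_left_Ioi g _ hb]

end

theorem integrableOn_exp_neg_div_pow {a : ℝ} (ha : 0 < a) (n : ℕ) :
    IntegrableOn (fun t => exp (-t) / t ^ n) (Ioi a) := by
  refine Integrable.mono' ((exp_neg_integrableOn_Ioi a one_pos).const_mul (a ^ n)⁻¹) ?_ ?_
  · refine ContinuousOn.aestronglyMeasurable ?_ measurableSet_Ioi
    exact (continuous_exp.comp continuous_neg).continuousOn.div (continuous_pow n).continuousOn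
      fun t ht => pow_ne_zero n (ha.trans ht).ne'
  · filter_upwards [ae_restrict_mem measurableSet_Ioi] with t ht
    have ht0 : 0 < t := ha.trans ht
    rw [norm_of_nonneg (by positivity), neg_one_mul, div_eq_mul_inv, mul_comm]
    gcongr
    exact ht.le

noncomputable def expIntegralE1 (a : ℝ) : ℝ := ∫ t in Ioi a, exp (-t) / t

theorem integral_Ioi_exp_neg_div_sq {a : ℝ} (ha : 0 < a) :
    ∫ t in Ioi a, exp (-t) / t ^ 2 = exp (-a) / a - expIntegralE1 a := by
  have hderiv : ∀ t ∈ Ici a, HasDerivAt (fun t => -(exp (-t) / t))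
      (exp (-t) / t + exp (-t) / t ^ 2) t := by
    intro t ht
    have ht0 : t ≠ 0 := (ha.trans_le ht).ne'
    refine (((hasDerivAt_neg t).exp).fun_div (hasDerivAt_id' t) ht0).fun_neg.congr_deriv ?_
    field_simp
    ring
  have hlim : Tendsto (fun t => -(exp (-t) / t)) atTop (𝓝 0) := by
    simpa using (tendsto_exp_neg_atTop_nhds_zero.div_atTop tendsto_id).neg
  have hsum := integral_Ioi_of_hasDerivAt_of_nonneg' hderiv
    (fun t ht => by have := ha.trans ht; positivity) hlim
  have h1 : IntegrableOn (fun t => exp (-t) / t) (Ioi a) := by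
    simpa using integrableOn_exp_neg_div_pow ha 1
  rw [integral_add h1 (integrableOn_exp_neg_div_pow ha 2)] at hsum
  rw [expIntegralE1]
  linarith

theorem exp_neg_mul_div_le_expIntegralE1 {a : ℝ} (ha : 0 < a) :
    exp (-a) * (a + 3) / (a ^ 2 + 4 * a + 2) ≤ expIntegralE1 a := by
  set P : ℝ → ℝ := fun t => exp (-t) * (t + 3) / (t ^ 2 + 4 * t + 2)
  set P' : ℝ → ℝ := fun t =>
    exp (-t) * (t ^ 3 + 8 * t ^ 2 + 20 * t + 16) / (t ^ 2 + 4 * t + 2) ^ 2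
  have hderiv : ∀ t ∈ Ici a, HasDerivAt (fun t => -P t) (P' t) t := by
    intro t ht
    have ht0 : 0 < t := ha.trans_le ht
    have hq : HasDerivAt (fun t : ℝ => t ^ 2 + 4 * t + 2) (2 * t + 4) t := by
      simpa using ((hasDerivAt_pow 2 t).add ((hasDerivAt_id t).const_mul 4)).add_const 2
    refine ((((hasDerivAt_neg t).exp).fun_mul ((hasDerivAt_id' t).add_const 3)).fun_div hq
      (by positivity)).fun_neg.congr_deriv ?_
    simp only [P']
    field_simp
    ring
  have hP'_nonneg : ∀ t ∈ Ioi a, 0 ≤ P' t := fun t ht => by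
    have := ha.trans ht; positivity
  have hlim : Tendsto (fun t => -P t) atTop (𝓝 0) := by
    rw [← neg_zero]
    refine (tendsto_of_tendsto_of_tendsto_of_le_of_le' tendsto_const_nhds
      tendsto_exp_neg_atTop_nhds_zero ?_ ?_).neg
    · filter_upwards [eventually_gt_atTop 0] with t ht
      positivity
    · filter_upwards [eventually_ge_atTop 1] with t ht
      rw [div_le_iff₀ (by positivity)]
      nlinarith [exp_pos (-t)]
  have hP'_int := integrableOn_Ioi_deriv_of_nonneg' hderiv hP'_nonneg hlim
  have hP : ∫ t in Ioi a, P' t = P a := by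
    simpa using integral_Ioi_of_hasDerivAt_of_nonneg' hderiv hP'_nonneg hlim
  change P a ≤ _
  rw [← hP, expIntegralE1]
  refine setIntegral_mono_on hP'_int (by simpa using integrableOn_exp_neg_div_pow ha 1)
    measurableSet_Ioi fun t ht => ?_
  have ht0 : 0 < t := ha.trans ht
  -- the comparison has slack exactly 4: `(t² + 4t + 2)² = t (t³ + 8t² + 20t + 16) + 4`
  rw [div_le_div_iff₀ (by positivity) ht0]
  nlinarith [exp_pos (-t)]

theorem integral_inv_add_sq_expMeasure {l : ℝ} (hl : 0 < l) (F : ℝ) :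
    ∫ x, 1 / (F + x) ^ 2 ∂expMeasure l =
      l ^ 2 * exp (l * F) * ∫ t in Ioi (l * F), exp (-t) / t ^ 2 := by
  have hrewrite : ∀ x, (l * exp (-(l * x))) • (1 / (F + x) ^ 2) =
      (l ^ 3 * exp (l * F)) • (exp (-(l * (x + F))) / (l * (x + F)) ^ 2) := by
    intro x
    rw [smul_eq_mul, smul_eq_mul, show -(l * (x + F)) = -(l * x) + -(l * F) by ring, exp_add,
      exp_neg (l * F)]
    field_simp
    ring
  rw [integral_expMeasure hl.le, integral_congr_ae (ae_of_all _ hrewrite), integral_smul,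
    integral_Ioi_comp_mul_add (fun t => exp (-t) / t ^ 2) hl, zero_add, smul_eq_mul, smul_eq_mul]
  field_simp

/-- For `Z ~ Exp(l)` (`l > 0`) and `F > 0`:
`E[1/(F+Z)²] = l·(1/F − l·e^{lF}·∫_{lF}^∞ e^{−t}/t dt)` and
`E[1/(F+Z)²] ≤ (l²F + 2l)/(l²F³ + 4lF² + 2F)`. -/
theorem exp_inv_sq_shift (l F : ℝ) (hl : 0 < l) (hF : 0 < F) :
    (∫ x, 1 / (F + x) ^ 2 ∂(expMeasure l)) =
      l * (1 / F - l * Real.exp (l * F) * ∫ t in Set.Ici (l * F), Real.exp (-t) / t) ∧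
    (∫ x, 1 / (F + x) ^ 2 ∂(expMeasure l)) ≤
      (l ^ 2 * F + 2 * l) / (l ^ 2 * F ^ 3 + 4 * l * F ^ 2 + 2 * F) := by
  have ha : 0 < l * F := mul_pos hl hF
  have hE1 : ∫ t in Ici (l * F), exp (-t) / t = expIntegralE1 (l * F) :=
    integral_Ici_eq_integral_Ioi
  rw [hE1, integral_inv_add_sq_expMeasure hl F, integral_Ioi_exp_neg_div_sq ha, exp_neg]
  constructor
  · field_simp
  · calc l ^ 2 * exp (l * F) * ((exp (l * F))⁻¹ / (l * F) - expIntegralE1 (l * F))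
        ≤ l ^ 2 * exp (l * F) * ((exp (l * F))⁻¹ / (l * F) -
            (exp (l * F))⁻¹ * (l * F + 3) / ((l * F) ^ 2 + 4 * (l * F) + 2)) := by
          gcongr
          simpa [exp_neg] using exp_neg_mul_div_le_expIntegralE1 ha
      _ = (l ^ 2 * F + 2 * l) / (l ^ 2 * F ^ 3 + 4 * l * F ^ 2 + 2 * F) := by
          field_simp
          ring
end
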